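/- Let (A,μ,α) be a Hom-alternative algebra. Then J_{A⁻} = 6·as_A, where A⁻ is the commutator Hom-algebra with bracket [x,y] = xy − yx. -/
import Mathlib


variable {K A : Type*} [Field K] [CharZero K] [AddCommGroup A] [Module K A]

/-- Hom-associator of a multiplication μ with twisting map α. -/
def homAs (μ : A →ₗ[K] A →ₗ[K] A) (α : A →ₗ[K] A) (x y z : A) : A :=
  μ (μ x y) (α z) - μ (α x) (μ y z)

lemma homAs_swap12 (μ : A →ₗ[K] A →ₗ[K] A) (α : A →ₗ[K] A)
    (h1 : ∀ x y : A, homAs μ α x x y = 0) (x y z : A) :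
    homAs μ α x y z = - homAs μ α y x z := by
  have h := h1 (x + y) z
  have hx := h1 x z
  have hy := h1 y z
  simp only [homAs, map_add, LinearMap.add_apply] at h hx hy ⊢
  abel_nf at h hx hy ⊢
  linear_combination (norm := abel_nf) h - hx - hy

lemma homAs_swap23 (μ : A →ₗ[K] A →ₗ[K] A) (α : A →ₗ[K] A)
    (h2 : ∀ x y : A, homAs μ α x y y = 0) (x y z : A) :
    homAs μ α x y z = - homAs μ α x z y := by
  have h := h2 x (y + z)
  have hy := h2 x y
  have hz := h2 x z
  simp only [homAs, map_add, LinearMap.add_apply] at h hy hz ⊢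
  abel_nf at h hy hz ⊢
  linear_combination (norm := abel_nf) h - hy - hz

theorem stmt12 (μ : A →ₗ[K] A →ₗ[K] A) (α : A →ₗ[K] A)
    (hmult : ∀ x y : A, α (μ x y) = μ (α x) (α y))
    (h1 : ∀ x y : A, homAs μ α x x y = 0)
    (h2 : ∀ x y : A, homAs μ α x y y = 0)
    (h3 : ∀ x y : A, homAs μ α x y x = 0) :
    ∀ x y z : A,
      (μ (μ x y - μ y x) (α z) - μ (α z) (μ x y - μ y x))
        + (μ (μ z x - μ x z) (α y) - μ (α y) (μ z x - μ x z))
        + (μ (μ y z - μ z y) (α x) - μ (α x) (μ y z - μ z y))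
      = (6 : K) • homAs μ α x y z := by
  intro x y z
  have e1 : homAs μ α y x z = - homAs μ α x y z := by
    rw [homAs_swap12 μ α h1]
  have e2 : homAs μ α x z y = - homAs μ α x y z := by
    rw [homAs_swap23 μ α h2]
  have e3 : homAs μ α z x y = homAs μ α x y z := by
    rw [homAs_swap12 μ α h1, homAs_swap23 μ α h2, homAs_swap12 μ α h1]; abel
  have e4 : homAs μ α y z x = homAs μ α x y z := by
    rw [homAs_swap23 μ α h2, homAs_swap12 μ α h1, homAs_swap23 μ α h2]; abel
  have e5 : homAs μ α z y x = - homAs μ α x y z := by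
    rw [homAs_swap12 μ α h1, e4]
  have expand :
      (μ (μ x y - μ y x) (α z) - μ (α z) (μ x y - μ y x))
        + (μ (μ z x - μ x z) (α y) - μ (α y) (μ z x - μ x z))
        + (μ (μ y z - μ z y) (α x) - μ (α x) (μ y z - μ z y))
      = homAs μ α x y z + homAs μ α z x y + homAs μ α y z x
        - homAs μ α y x z - homAs μ α x z y - homAs μ α z y x := by
    simp only [homAs, map_sub, LinearMap.sub_apply]
    abel
  rw [expand, e1, e2, e3, e4, e5]
  have : (6 : K) • homAs μ α x y z = (6 : ℕ) • homAs μ α x y z := by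
    rw [← Nat.cast_smul_eq_nsmul K]; norm_num
  rw [this]
  abel
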